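/- Let g ∈ SL₂(ℝ), ε > 0, λ = ‖g‖, and let ĝ(θ) = (1/π)arctan(λ⁻² tan(πθ)). Then for x, x₀ ∈ [0,1] with |x − 1/2| ≥ ε and |x₀ − 1/2| ≥ ε (and x, x₀ on the same side of 1/2), one has ĝ(x) = ĝ(x₀) + ĝ'(x₀)(x − x₀) + O_ε((x − x₀)²/λ²). -/

import Mathlib

/-!
Write `c = λ⁻² ∈ (0, 1]`. Clearing `tan`, `ĝ'(θ) = c / (cos² πθ + c² sin² πθ)`, and the
denominator of `ĝ''` is at least `cos⁴ πθ`, so `|ĝ''(θ)| ≤ 2πc / |cos πθ|³`. Points of `[0, 1]`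
at distance `≥ ε` from `1/2` have `|cos πθ| ≥ sin (π min(ε, 1/2))`; as `x` and `x₀` lie on the
same side of `1/2`, so does the segment between them, and the second-order mean value bound
on that segment gives a remainder `O_ε(c (x - x₀)²)`.
-/

/-- The chart form of the action of `g ∈ SL₂(ℝ)` on `ℝP¹` in singular-vector
coordinates: `ĝ(θ) = (1/π) arctan(λ⁻² tan(πθ))`, where `λ = ‖g‖ ≥ 1`. -/
noncomputable def ghat (lam : ℝ) (θ : ℝ) : ℝ :=
  (1 / Real.pi) * Real.arctan (lam⁻¹ ^ 2 * Real.tan (Real.pi * θ))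

open Real Set

theorem abs_first_order_remainder_le {f f' f'' : ℝ → ℝ} {M x₀ x : ℝ}
    (hf : ∀ t ∈ uIcc x₀ x, HasDerivAt f (f' t) t)
    (hf' : ∀ t ∈ uIcc x₀ x, HasDerivAt f' (f'' t) t)
    (hM : ∀ t ∈ uIcc x₀ x, |f'' t| ≤ M) :
    |f x - f x₀ - f' x₀ * (x - x₀)| ≤ M * (x - x₀) ^ 2 := by
  have hx₀ : x₀ ∈ uIcc x₀ x := left_mem_uIcc
  have hM0 : 0 ≤ M := (abs_nonneg _).trans (hM x₀ hx₀)
  have hf'_lip : ∀ t ∈ uIcc x₀ x, ‖f' t - f' x₀‖ ≤ M * ‖x - x₀‖ := fun t ht =>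
    calc ‖f' t - f' x₀‖ ≤ M * ‖t - x₀‖ :=
          (convex_uIcc x₀ x).norm_image_sub_le_of_norm_hasDerivWithin_le
            (fun s hs => (hf' s hs).hasDerivWithinAt) hM hx₀ ht
      _ ≤ M * ‖x - x₀‖ := mul_le_mul_of_nonneg_left (abs_sub_left_of_mem_uIcc ht) hM0
  have hg : ∀ t ∈ uIcc x₀ x,
      HasDerivWithinAt (fun s => f s - s * f' x₀) (f' t - f' x₀) (uIcc x₀ x) t := fun t ht =>
    ((hf t ht).sub (hasDerivAt_mul_const (f' x₀))).hasDerivWithinAt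
  calc |f x - f x₀ - f' x₀ * (x - x₀)| = ‖f x - x * f' x₀ - (f x₀ - x₀ * f' x₀)‖ := by
        rw [norm_eq_abs]; ring_nf
    _ ≤ M * ‖x - x₀‖ * ‖x - x₀‖ := (convex_uIcc x₀ x).norm_image_sub_le_of_norm_hasDerivWithin_le
        hg hf'_lip hx₀ right_mem_uIcc
    _ = M * (x - x₀) ^ 2 := by rw [mul_assoc, norm_eq_abs, abs_mul_abs_self, sq]

noncomputable def ghatDeriv (c θ : ℝ) : ℝ :=
  c / (cos (π * θ) ^ 2 + c ^ 2 * sin (π * θ) ^ 2)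

noncomputable def ghatDeriv2 (c θ : ℝ) : ℝ :=
  2 * π * c * (1 - c ^ 2) * sin (π * θ) * cos (π * θ) /
    (cos (π * θ) ^ 2 + c ^ 2 * sin (π * θ) ^ 2) ^ 2

lemma cos_sq_add_sq_mul_sin_sq_pos {c x : ℝ} (h : cos x ≠ 0) :
    0 < cos x ^ 2 + c ^ 2 * sin x ^ 2 := by
  positivity

lemma hasDerivAt_ghat {lam θ : ℝ} (h : cos (π * θ) ≠ 0) :
    HasDerivAt (ghat lam) (ghatDeriv (lam⁻¹ ^ 2) θ) θ := by
  have htan : HasDerivAt (fun t => tan (π * t)) (1 / cos (π * θ) ^ 2 * π) θ :=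
    (hasDerivAt_tan h).comp θ (hasDerivAt_const_mul π)
  refine ((htan.const_mul (lam⁻¹ ^ 2)).arctan.const_mul (1 / π)).congr_deriv ?_
  have := (cos_sq_add_sq_mul_sin_sq_pos (c := lam⁻¹ ^ 2) h).ne'
  unfold ghatDeriv
  rw [tan_eq_sin_div_cos]
  field_simp

lemma hasDerivAt_ghatDeriv {c θ : ℝ} (h : cos (π * θ) ≠ 0) :
    HasDerivAt (ghatDeriv c) (ghatDeriv2 c θ) θ := by
  have hcos : HasDerivAt (fun t => cos (π * t)) (-sin (π * θ) * π) θ :=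
    (hasDerivAt_cos _).comp θ (hasDerivAt_const_mul π)
  have hsin : HasDerivAt (fun t => sin (π * t)) (cos (π * θ) * π) θ :=
    (hasDerivAt_sin _).comp θ (hasDerivAt_const_mul π)
  have hD := (cos_sq_add_sq_mul_sin_sq_pos (c := c) h).ne'
  refine ((hasDerivAt_const θ c).div ((hcos.pow 2).add ((hsin.pow 2).const_mul (c ^ 2))) hD)
    |>.congr_deriv ?_
  simp only [ghatDeriv2, Pi.add_apply, Pi.pow_apply]
  field_simp
  ring

lemma abs_ghatDeriv2_le {c θ : ℝ} (hc0 : 0 ≤ c) (hc1 : c ≤ 1) (h : cos (π * θ) ≠ 0) :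
    |ghatDeriv2 c θ| ≤ 2 * π * c / |cos (π * θ)| ^ 3 := by
  set C := cos (π * θ)
  set S := sin (π * θ)
  have hnum : |2 * π * c * (1 - c ^ 2) * S * C| ≤ 2 * π * c * |C| := by
    have h1c : 0 ≤ 1 - c ^ 2 := by nlinarith
    have hS : (1 - c ^ 2) * |S| ≤ 1 := by nlinarith [abs_sin_le_one (π * θ)]
    rw [abs_mul, abs_mul, abs_of_nonneg (by positivity : 0 ≤ 2 * π * c * (1 - c ^ 2))]
    calc 2 * π * c * (1 - c ^ 2) * |S| * |C| = 2 * π * c * |C| * ((1 - c ^ 2) * |S|) := by ring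
      _ ≤ 2 * π * c * |C| := mul_le_of_le_one_right (by positivity) hS
  have hden : C ^ 2 ≤ C ^ 2 + c ^ 2 * S ^ 2 := le_add_of_nonneg_right (by positivity)
  calc |ghatDeriv2 c θ| = |2 * π * c * (1 - c ^ 2) * S * C| / (C ^ 2 + c ^ 2 * S ^ 2) ^ 2 := by
        rw [ghatDeriv2, abs_div, abs_of_nonneg (sq_nonneg (C ^ 2 + c ^ 2 * S ^ 2))]
    _ ≤ 2 * π * c * |C| / (C ^ 2) ^ 2 :=
        div_le_div₀ (by positivity) hnum (by positivity) (pow_le_pow_left₀ (sq_nonneg _) hden 2)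
    _ = 2 * π * c / |C| ^ 3 := by
        rw [← sq_abs C]
        field_simp

lemma sin_pi_mul_le_abs_cos_pi_mul {δ t : ℝ} (hδ : 0 ≤ δ) (ht : t ∈ Icc 0 1)
    (hδt : δ ≤ |t - 1 / 2|) : sin (π * δ) ≤ |cos (π * t)| := by
  have hπ := pi_pos
  have ht' : |t - 1 / 2| ≤ 1 / 2 := abs_sub_le_iff.2 ⟨by linarith [ht.2], by linarith [ht.1]⟩
  have habs : |π * (t - 1 / 2)| = π * |t - 1 / 2| := by rw [abs_mul, abs_of_pos hπ]
  calc sin (π * δ) ≤ sin |π * (t - 1 / 2)| := habs ▸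
        sin_le_sin_of_le_of_le_pi_div_two (by nlinarith) (by nlinarith) (by gcongr)
    _ = |sin (π * (t - 1 / 2))| := (abs_sin_eq_sin_abs_of_abs_le_pi (by nlinarith)).symm
    _ = |cos (π * t)| := by
        rw [show π * (t - 1 / 2) = π * t - π / 2 by ring, sin_sub_pi_div_two, abs_neg]

lemma le_abs_sub_of_mem_uIcc {a m x y t : ℝ} (hx : a ≤ |x - m|) (hy : a ≤ |y - m|)
    (hside : (x ≤ m ∧ y ≤ m) ∨ (m ≤ x ∧ m ≤ y)) (ht : t ∈ uIcc x y) : a ≤ |t - m| := by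
  rcases hside with ⟨hxm, hym⟩ | ⟨hxm, hym⟩
  · rw [abs_of_nonpos (sub_nonpos.2 hxm)] at hx
    rw [abs_of_nonpos (sub_nonpos.2 hym)] at hy
    have : t ≤ max x y := ht.2
    rw [abs_of_nonpos (by linarith [max_le hxm hym])]
    linarith [max_le (show x ≤ m - a by linarith) (show y ≤ m - a by linarith)]
  · rw [abs_of_nonneg (sub_nonneg.2 hxm)] at hx
    rw [abs_of_nonneg (sub_nonneg.2 hym)] at hy
    have : min x y ≤ t := ht.1
    rw [abs_of_nonneg (by linarith [le_min hxm hym])]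
    linarith [le_min (show m + a ≤ x by linarith) (show m + a ≤ y by linarith)]

theorem ghat_first_order_approximation :
    ∀ ε > (0 : ℝ), ∃ C > (0 : ℝ), ∀ lam ≥ (1 : ℝ), ∀ x x₀ : ℝ,
      x ∈ Set.Icc (0 : ℝ) 1 → x₀ ∈ Set.Icc (0 : ℝ) 1 →
      ε ≤ |x - 1 / 2| → ε ≤ |x₀ - 1 / 2| →
      ((x ≤ 1 / 2 ∧ x₀ ≤ 1 / 2) ∨ (1 / 2 ≤ x ∧ 1 / 2 ≤ x₀)) →
      |ghat lam x - ghat lam x₀ - deriv (ghat lam) x₀ * (x - x₀)| ≤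
        C * (x - x₀) ^ 2 / lam ^ 2 := by
  intro ε hε
  set δ := min ε (1 / 2)
  have hδ : 0 < δ := lt_min hε one_half_pos
  have hsin : 0 < sin (π * δ) :=
    sin_pos_of_pos_of_lt_pi (by positivity) (by nlinarith [pi_pos, min_le_right ε (1 / 2)])
  refine ⟨2 * π / sin (π * δ) ^ 3, by positivity, ?_⟩
  intro lam hlam x x₀ hx hx₀ hεx hεx₀ hside
  set c := lam⁻¹ ^ 2
  have hc0 : 0 ≤ c := by positivity
  have hc1 : c ≤ 1 := pow_le_one₀ (by positivity) (inv_le_one_of_one_le₀ hlam)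
  have hcos : ∀ t ∈ uIcc x₀ x, sin (π * δ) ≤ |cos (π * t)| := fun t ht =>
    sin_pi_mul_le_abs_cos_pi_mul hδ.le (uIcc_subset_Icc hx₀ hx ht)
      ((min_le_left _ _).trans (le_abs_sub_of_mem_uIcc hεx hεx₀ hside (uIcc_comm x₀ x ▸ ht)))
  have hcos_ne : ∀ t ∈ uIcc x₀ x, cos (π * t) ≠ 0 := fun t ht =>
    abs_pos.1 (hsin.trans_le (hcos t ht))
  have hbound : ∀ t ∈ uIcc x₀ x, |ghatDeriv2 c t| ≤ 2 * π * c / sin (π * δ) ^ 3 := fun t ht =>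
    (abs_ghatDeriv2_le hc0 hc1 (hcos_ne t ht)).trans (by gcongr; exact hcos t ht)
  rw [(hasDerivAt_ghat (hcos_ne x₀ left_mem_uIcc)).deriv]
  calc _ ≤ 2 * π * c / sin (π * δ) ^ 3 * (x - x₀) ^ 2 :=
        abs_first_order_remainder_le (fun t ht => hasDerivAt_ghat (hcos_ne t ht))
          (fun t ht => hasDerivAt_ghatDeriv (hcos_ne t ht)) hbound
    _ = 2 * π / sin (π * δ) ^ 3 * (x - x₀) ^ 2 / lam ^ 2 := by
        simp only [c]
        ring
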